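/- arXiv:1203.2257 — 5 statements merged into one kernel-verified Lean document; each statement's English description precedes it below -/
import Mathlib

section
/- If t is a real number such that ‖b(F)·t‖ → 0 as min F → ∞ over finite subsets F of ℕ (where b(F) = ∑_{j∈F} b_j for an increasing sequence b of positive integers, and ‖x‖ denotes distance to the nearest integer), then ∑_{n≥1} ‖b_n·t‖ < ∞. -/
/-!
Write `b_n t = r_n + θ_n` with `r_n` the nearest integer and `|θ_n| ≤ 1/2`. Beyond the index `K`
where `‖b(F) t‖ < 1/4`, an induction on `F` upgrades this to `|∑_{n ∈ F} θ_n| < 1/4`: adding one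
term moves the sum by at most `1/2`, so it stays in `(-3/4, 3/4)`, where being within `1/4` of an
integer forces being within `1/4` of `0`. Applying this to the sets of positive and of negative
`θ_n` bounds every finite sum of `|θ_n| = ‖b_n t‖` by `1/2`.
-/

/-- distance from a real number to the nearest integer -/
noncomputable def nint (x : ℝ) : ℝ := |x - round x|

open Finset

lemma nint_sub_intCast (x : ℝ) (m : ℤ) : nint (x - m) = nint x := by
  simp only [nint, round_sub_intCast, Int.cast_sub]
  ring_nf

lemma nint_sum_sub_round {ι : Type*} (s : Finset ι) (x : ι → ℝ) :
    nint (∑ i ∈ s, (x i - round (x i))) = nint (∑ i ∈ s, x i) := by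
  rw [sum_sub_distrib, ← Int.cast_sum, nint_sub_intCast]

lemma abs_lt_of_nint_lt {x δ : ℝ} (hx : |x| < 1 - δ) (hδ : nint x < δ) : |x| < δ := by
  have hround : round x = 0 := by
    rw [← Int.abs_lt_one_iff, ← Int.cast_lt (R := ℝ), Int.cast_abs, Int.cast_one]
    calc |(round x : ℝ)| = |x - (x - round x)| := by ring_nf
      _ ≤ |x| + nint x := abs_sub _ _
      _ < 1 := by linarith
  simpa [nint, hround] using hδ

lemma abs_sum_lt_of_nint_sum_lt {ι : Type*} [DecidableEq ι] {θ : ι → ℝ} {δ : ℝ}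
    (hδ : δ ≤ 1 / 4) (hθ : ∀ i, |θ i| ≤ 1 / 2) (hsum : ∀ F : Finset ι, nint (∑ i ∈ F, θ i) < δ)
    (F : Finset ι) : |∑ i ∈ F, θ i| < δ := by
  induction F using Finset.induction_on with
  | empty => simpa [nint] using hsum ∅
  | insert a F ha ih =>
    refine abs_lt_of_nint_lt ?_ (hsum _)
    rw [sum_insert ha]
    linarith [abs_add_le (θ a) (∑ i ∈ F, θ i), hθ a]

lemma summable_abs_of_abs_sum_le {ι : Type*} {f : ι → ℝ} {C : ℝ}
    (h : ∀ F : Finset ι, |∑ i ∈ F, f i| ≤ C) : Summable fun i => |f i| := by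
  classical
  refine summable_of_sum_le (c := 2 * C) (fun i => abs_nonneg _) fun u => ?_
  have hsplit : ∑ i ∈ u, |f i| = ∑ i ∈ u with 0 ≤ f i, f i - ∑ i ∈ u with ¬ 0 ≤ f i, f i := by
    rw [← sum_filter_add_sum_filter_not u (fun i => 0 ≤ f i), sub_eq_add_neg, ← sum_neg_distrib]
    congr 1
    · exact sum_congr rfl fun i hi => abs_of_nonneg (mem_filter.1 hi).2
    · exact sum_congr rfl fun i hi => abs_of_neg (not_le.1 (mem_filter.1 hi).2)
  rw [hsplit]
  linarith [le_abs_self (∑ i ∈ u with 0 ≤ f i, f i), neg_abs_le (∑ i ∈ u with ¬ 0 ≤ f i, f i),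
    h (u.filter fun i => 0 ≤ f i), h (u.filter fun i => ¬ 0 ≤ f i)]

theorem stmt0_general (b : ℕ → ℕ) (t : ℝ)
    (hIP : ∀ ε > 0, ∃ K : ℕ, ∀ F : Finset ℕ, ∀ hF : F.Nonempty,
      K ≤ F.min' hF → nint ((∑ j ∈ F, b j : ℕ) * t) < ε) :
    Summable (fun n => nint ((b n : ℝ) * t)) := by
  obtain ⟨K, hK⟩ := hIP (1 / 4) (by norm_num)
  set θ : ℕ → ℝ := fun n => (b (n + K) : ℝ) * t - round ((b (n + K) : ℝ) * t)
  have hθ : ∀ F : Finset ℕ, nint (∑ n ∈ F, θ n) < 1 / 4 := by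
    intro F
    rcases F.eq_empty_or_nonempty with rfl | hF
    · norm_num [nint]
    · have hmin : K ≤ (F.map (addRightEmbedding K)).min' (hF.map) :=
        le_min' _ _ _ fun j hj => by
          obtain ⟨n, -, rfl⟩ := mem_map.1 hj
          simp
      rw [nint_sum_sub_round]
      simpa [sum_mul] using hK _ _ hmin
  have hsum := summable_abs_of_abs_sum_le fun F =>
    (abs_sum_lt_of_nint_sum_lt le_rfl (fun n => abs_sub_round _) hθ F).le
  exact (summable_nat_add_iff K).1 hsum

/-- If `‖b(F)·t‖ → 0` as `min F → ∞` over finite nonempty subsets `F` of `ℕ`,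
then `∑ₙ ‖bₙ t‖ < ∞`. -/
theorem stmt0 (b : ℕ → ℕ) (hb : StrictMono b) (hbpos : ∀ n, 0 < b n) (t : ℝ)
    (hIP : ∀ ε > 0, ∃ K : ℕ, ∀ F : Finset ℕ, ∀ hF : F.Nonempty,
      K ≤ F.min' hF → nint ((∑ j ∈ F, b j : ℕ) * t) < ε) :
    Summable (fun n => nint ((b n : ℝ) * t)) :=
  stmt0_general b t hIP
end

section
/- If b is a multiplicative sequence of positive integers (b_n divides b_{n+1} for all n, with b_{n+1}/b_n ≥ 2) and sup_n b_{n+1}/b_n = ∞, then the group G₁(b) = {t ∈ ℝ/ℤ : ∑_n ‖b_n t‖ < ∞} is uncountable. -/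
/-- `G₁(b)` inside the circle `ℝ/ℤ`; the norm on `AddCircle (1:ℝ)` is the
distance to the nearest integer. -/
noncomputable def G1 (b : ℕ → ℕ) : Set (AddCircle (1:ℝ)) :=
  {t | Summable (fun n => ‖b n • t‖)}

/-! Choose indices `m₀ < m₁ < ⋯` with `2^(k+1) b(mₖ) ≤ qₖ := b(mₖ + 1)` and, for `s ⊆ ℕ`, put
`tₛ = ∑_{k ∈ s} 1/qₖ`. The terms with `mₖ < n` contribute integers to `bₙ tₛ`, so
`‖bₙ tₛ‖ ≤ ∑_{k : n ≤ mₖ} bₙ/qₖ`, and summing over `n` first gives at most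
`∑ₖ 2 b(mₖ)/qₖ ≤ ∑ₖ 2⁻ᵏ`. Since `q_{k+1} ≥ 3 qₖ`, each `1/qₖ` exceeds the tail after it and
`tₛ < 1`, so `s ↦ tₛ` is injective modulo `1`. -/

open Filter Finset

theorem summable_and_tsum_le_of_succ_le_mul {a : ℕ → ℝ} {r : ℝ} (ha : ∀ k, 0 ≤ a k)
    (hr₀ : 0 ≤ r) (hr₁ : r < 1) (h : ∀ k, a (k + 1) ≤ r * a k) :
    Summable a ∧ ∑' k, a k ≤ a 0 / (1 - r) := by
  have hgeom : ∀ k, a k ≤ a 0 * r ^ k := by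
    intro k
    induction k with
    | zero => simp
    | succ k ih =>
      calc a (k + 1) ≤ r * a k := h k
        _ ≤ r * (a 0 * r ^ k) := by gcongr
        _ = a 0 * r ^ (k + 1) := by ring
  have hmaj : Summable fun k => a 0 * r ^ k :=
    (summable_geometric_of_lt_one hr₀ hr₁).mul_left _
  have hs : Summable a := hmaj.of_nonneg_of_le ha hgeom
  refine ⟨hs, ?_⟩
  calc ∑' k, a k ≤ ∑' k, a 0 * r ^ k := hs.tsum_le_tsum hgeom hmaj
    _ = a 0 / (1 - r) := by
      rw [tsum_mul_left, tsum_geometric_of_lt_one hr₀ hr₁, div_eq_mul_inv]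

theorem injective_tsum_indicator {a : ℕ → ℝ} (ha : ∀ k, 0 ≤ a k) (hs : Summable a)
    (htail : ∀ k, ∑' i, a (i + (k + 1)) < a k) :
    Function.Injective fun s : Set ℕ => ∑' k, s.indicator a k := by
  intro s t hst
  ext k
  induction k using Nat.strong_induction_on with
  | _ k ih =>
  have hsplit (u : Set ℕ) : ∑' i, u.indicator a i =
      ∑ i ∈ range k, u.indicator a i + u.indicator a k + ∑' i, u.indicator a (i + (k + 1)) := by
    rw [← (hs.indicator u).sum_add_tsum_nat_add (k + 1), sum_range_succ]
  have htail_mem (u : Set ℕ) :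
      0 ≤ ∑' i, u.indicator a (i + (k + 1)) ∧ ∑' i, u.indicator a (i + (k + 1)) < a k := by
    have hle (i : ℕ) : u.indicator a (i + (k + 1)) ≤ a (i + (k + 1)) :=
      Set.indicator_le_self' (fun j _ => ha j) _
    refine ⟨tsum_nonneg fun i => Set.indicator_nonneg (fun j _ => ha j) _, ?_⟩
    exact (Summable.tsum_le_tsum hle ((summable_nat_add_iff (k + 1)).mpr (hs.indicator u))
      ((summable_nat_add_iff (k + 1)).mpr hs)).trans_lt (htail k)
  have hhead : ∑ i ∈ range k, s.indicator a i = ∑ i ∈ range k, t.indicator a i :=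
    sum_congr rfl fun i hi => Set.indicator_eq_indicator (ih i (mem_range.mp hi)) rfl
  dsimp only at hst
  rw [hsplit s, hsplit t, hhead, add_assoc, add_assoc, add_right_inj] at hst
  have := htail_mem s
  have := htail_mem t
  by_cases hks : k ∈ s <;> by_cases hkt : k ∈ t <;>
    simp only [hks, hkt, Set.indicator_of_mem, Set.indicator_of_notMem, not_false_eq_true,
      zero_add] at hst ⊢ <;> linarith

theorem injective_coe_tsum_indicator_inv {q : ℕ → ℕ} (hq : ∀ k, 0 < q k)
    (hlac : ∀ k, 3 * q k ≤ q (k + 1)) (hq₀ : 2 ≤ q 0) :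
    Function.Injective fun s : Set ℕ =>
      ((∑' k, s.indicator (fun k => (q k : ℝ)⁻¹) k : ℝ) : AddCircle (1 : ℝ)) := by
  set a : ℕ → ℝ := fun k => (q k : ℝ)⁻¹
  have hq' (k : ℕ) : (0 : ℝ) < q k := by exact_mod_cast hq k
  have ha (k : ℕ) : 0 < a k := inv_pos.mpr (hq' k)
  have ha_lac (k : ℕ) : 3 * a (k + 1) ≤ a k := by
    rw [← div_eq_mul_inv, div_le_iff₀ (hq' _), inv_mul_eq_div, le_div_iff₀ (hq' _)]
    exact_mod_cast hlac k
  have ha₀ : a 0 < 2 / 3 := by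
    rw [inv_lt_comm₀ (hq' 0) (by norm_num)]
    have : (2 : ℝ) ≤ q 0 := by exact_mod_cast hq₀
    linarith
  have hgeom (j : ℕ) : Summable (fun i => a (i + j)) ∧ ∑' i, a (i + j) ≤ 3 / 2 * a j := by
    obtain ⟨hs, hle⟩ := summable_and_tsum_le_of_succ_le_mul (a := fun i => a (i + j))
      (fun i => (ha _).le) (by norm_num : (0 : ℝ) ≤ 1 / 3) (by norm_num)
      (fun i => by rw [add_right_comm]; linarith [ha_lac (i + j)])
    refine ⟨hs, hle.trans_eq ?_⟩
    rw [zero_add]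
    ring
  have hs : Summable a := by simpa using (hgeom 0).1
  have htail (k : ℕ) : ∑' i, a (i + (k + 1)) < a k := by
    linarith [(hgeom (k + 1)).2, ha_lac k, ha k]
  have hIco (s : Set ℕ) : ∑' k, s.indicator a k ∈ Set.Ico (0 : ℝ) (0 + 1) := by
    have hle : ∑' k, s.indicator a k ≤ ∑' k, a k :=
      (hs.indicator s).tsum_le_tsum (Set.indicator_le_self' fun j _ => (ha j).le) hs
    have htot : ∑' k, a k ≤ 3 / 2 * a 0 := by simpa using (hgeom 0).2
    exact ⟨tsum_nonneg fun i => Set.indicator_nonneg (fun j _ => (ha j).le) _, by linarith⟩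
  intro s t hst
  exact injective_tsum_indicator (fun k => (ha k).le) hs htail
    ((AddCircle.coe_eq_coe_iff_of_mem_Ico (hIco s) (hIco t)).mp hst)

theorem AddCircle.norm_coe_tsum_le {ι : Type*} {p : ℝ} {u : ι → ℝ} (hu : 0 ≤ u) (s : Finset ι)
    (hs : ∀ i ∈ s, (u i : AddCircle p) = 0) :
    ‖((∑' i, u i : ℝ) : AddCircle p)‖ ≤ ∑' i, (↑s : Set ι)ᶜ.indicator u i := by
  have hrest : 0 ≤ ∑' i, (↑s : Set ι)ᶜ.indicator u i :=
    tsum_nonneg (Set.indicator_nonneg fun i _ => hu i)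
  by_cases hsum : Summable u
  · have hfin : ((∑ i ∈ s, u i : ℝ) : AddCircle p) = 0 := by
      rw [← QuotientAddGroup.mk'_apply, map_sum]
      exact sum_eq_zero hs
    rw [← hsum.sum_add_tsum_compl (s := s), AddCircle.coe_add, hfin, zero_add,
      _root_.tsum_subtype]
    exact QuotientAddGroup.norm_mk_le_norm.trans_eq (Real.norm_of_nonneg hrest)
  · simpa [tsum_eq_zero_of_not_summable hsum] using hrest

theorem summable_tsum_of_summable_tsum_swap {c : ℕ → ℕ → ℝ} (hc : ∀ n k, 0 ≤ c n k)
    (hcol : ∀ k, Summable fun n => c n k) (htot : Summable fun k => ∑' n, c n k) :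
    Summable fun n => ∑' k, c n k := by
  have hswap : Summable fun p : ℕ × ℕ => c p.2 p.1 :=
    (summable_prod_of_nonneg fun p => hc p.2 p.1).mpr ⟨hcol, htot⟩
  exact ((summable_prod_of_nonneg fun p => hc p.1 p.2).mp
    ((Equiv.prodComm ℕ ℕ).summable_iff.mpr hswap)).2

theorem norm_nsmul_coe_tsum_indicator_inv_le {b q m : ℕ → ℕ} (hm : StrictMono m)
    (hdvd : ∀ k n, m k < n → q k ∣ b n) (n : ℕ) (s : Set ℕ)
    (hrow : Summable fun k => if n ≤ m k then (b n : ℝ) / q k else 0) :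
    ‖b n • ((∑' k, s.indicator (fun k => (q k : ℝ)⁻¹) k : ℝ) : AddCircle (1 : ℝ))‖ ≤
      ∑' k, if n ≤ m k then (b n : ℝ) / q k else 0 := by
  set a : ℕ → ℝ := fun k => (q k : ℝ)⁻¹
  set u : ℕ → ℝ := fun k => b n * s.indicator a k
  set F := (range n).filter fun k => m k < n
  rw [← AddCircle.coe_nsmul, nsmul_eq_mul, ← tsum_mul_left]
  have hu : 0 ≤ u :=
    fun k => mul_nonneg (Nat.cast_nonneg _) (Set.indicator_nonneg (fun k _ => by positivity) k)
  have hint (k : ℕ) (hk : k ∈ F) : (u k : AddCircle (1 : ℝ)) = 0 := by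
    obtain ⟨d, hd⟩ := hdvd k n (mem_filter.mp hk).2
    rw [AddCircle.coe_eq_zero_iff]
    by_cases hks : k ∈ s
    · by_cases hq : (q k : ℝ) = 0
      · exact ⟨0, by simp [u, a, hks, hq]⟩
      · exact ⟨d, by simp [u, a, hks, hd]; field_simp⟩
    · exact ⟨0, by simp [u, hks]⟩
  have hle (k : ℕ) : (↑F : Set ℕ)ᶜ.indicator u k ≤ if n ≤ m k then (b n : ℝ) / q k else 0 := by
    by_cases hk : m k < n
    · rw [Set.indicator_of_notMem (by simpa [F] using ⟨(hm.id_le k).trans_lt hk, hk⟩),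
        if_neg (not_le.mpr hk)]
    · rw [Set.indicator_of_mem (by simpa [F] using fun _ => hk), if_pos (not_lt.mp hk),
        div_eq_mul_inv]
      exact mul_le_mul_of_nonneg_left (Set.indicator_le_self' (fun k _ => by positivity) k)
        (Nat.cast_nonneg _)
  refine (AddCircle.norm_coe_tsum_le hu F hint).trans ?_
  exact Summable.tsum_le_tsum hle
    (hrow.of_nonneg_of_le (fun k => Set.indicator_nonneg (fun k _ => hu k) k) hle) hrow

theorem coe_tsum_indicator_inv_mem_G1 {b q m : ℕ → ℕ} (hm : StrictMono m)
    (hdvd : ∀ k n, m k < n → q k ∣ b n)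
    (hsum : Summable fun k => (∑ n ∈ range (m k + 1), (b n : ℝ)) / q k) (s : Set ℕ) :
    ((∑' k, s.indicator (fun k => (q k : ℝ)⁻¹) k : ℝ) : AddCircle (1 : ℝ)) ∈ G1 b := by
  set c : ℕ → ℕ → ℝ := fun n k => if n ≤ m k then (b n : ℝ) / q k else 0 with hc
  have hc0 (n k : ℕ) : 0 ≤ c n k := by simp only [hc]; split_ifs <;> positivity
  have hcol_support (k : ℕ) : ∀ n ∉ range (m k + 1), c n k = 0 := fun n hn => by
    simp only [hc, mem_range, not_lt, Nat.succ_le_iff] at hn ⊢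
    simp [hn.not_ge]
  have hcol_tsum (k : ℕ) : ∑' n, c n k = (∑ n ∈ range (m k + 1), (b n : ℝ)) / q k := by
    rw [tsum_eq_sum (hcol_support k), sum_div]
    refine sum_congr rfl fun n hn => ?_
    simp [hc, Nat.le_of_lt_succ (mem_range.mp hn)]
  have hrow (n : ℕ) : Summable (c n) := by
    refine hsum.of_nonneg_of_le (hc0 n) fun k => ?_
    simp only [hc]
    split_ifs with hnk
    · gcongr
      exact_mod_cast single_le_sum (fun i _ => Nat.zero_le (b i))
        (mem_range.mpr (Nat.lt_succ_of_le hnk))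
    · positivity
  have hmaj : Summable fun n => ∑' k, c n k :=
    summable_tsum_of_summable_tsum_swap hc0 (fun k => summable_of_ne_finset_zero (hcol_support k))
      (by simpa only [hcol_tsum] using hsum)
  exact hmaj.of_nonneg_of_le (fun n => norm_nonneg _)
    fun n => norm_nsmul_coe_tsum_indicator_inv_le hm hdvd n s (hrow n)

theorem uncountable_set_of_infinite (α : Type*) [Infinite α] : Uncountable (Set α) :=
  Cardinal.aleph0_lt_mk_iff.mp <| (Cardinal.aleph0_le_mk α).trans_lt <| by
    rw [Cardinal.mk_set]
    exact Cardinal.cantor _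

section Multiplicative

variable {b : ℕ → ℕ}

theorem sum_range_succ_le_two_mul (hratio : ∀ n, 2 * b n ≤ b (n + 1)) (N : ℕ) :
    ∑ i ∈ range (N + 1), b i ≤ 2 * b N := by
  induction N with
  | zero => simp [two_mul]
  | succ N ih => rw [sum_range_succ]; linarith [hratio N]

theorem frequently_mul_le_succ (hbpos : ∀ n, 0 < b n) (hmono : Monotone b)
    (hsup : ∀ M : ℕ, ∃ n, M * b n ≤ b (n + 1)) (M : ℕ) :
    ∃ᶠ n in atTop, M * b n ≤ b (n + 1) := by
  rw [frequently_atTop]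
  intro N
  obtain ⟨n, hn⟩ := hsup (M + b N + 1)
  have hbig : M + b N + 1 ≤ (M + b N + 1) * b n := Nat.le_mul_of_pos_right _ (hbpos n)
  have hM : M * b n ≤ (M + b N + 1) * b n := Nat.mul_le_mul_right _ (by omega)
  refine ⟨n, ?_, hM.trans hn⟩
  by_contra! hlt
  have := hmono (by omega : n + 1 ≤ N)
  omega

variable {m : ℕ → ℕ}

theorem three_mul_le_of_pow_mul_le (hmono : Monotone b) (hm : StrictMono m)
    (hgap : ∀ k, 2 ^ (k + 1) * b (m k) ≤ b (m k + 1)) (k : ℕ) :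
    3 * b (m k + 1) ≤ b (m (k + 1) + 1) := by
  have h4 : 4 ≤ 2 ^ (k + 2) := by
    rw [pow_add]
    linarith [Nat.one_le_two_pow (n := k)]
  calc 3 * b (m k + 1) ≤ 4 * b (m (k + 1)) := by linarith [hmono (hm (Nat.lt_succ_self k))]
    _ ≤ 2 ^ (k + 2) * b (m (k + 1)) := Nat.mul_le_mul_right _ h4
    _ ≤ b (m (k + 1) + 1) := hgap (k + 1)

theorem summable_sum_range_div_of_pow_mul_le (hbpos : ∀ n, 0 < b n)
    (hratio : ∀ n, 2 * b n ≤ b (n + 1)) (hgap : ∀ k, 2 ^ (k + 1) * b (m k) ≤ b (m k + 1)) :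
    Summable fun k => (∑ n ∈ range (m k + 1), (b n : ℝ)) / b (m k + 1) := by
  refine summable_geometric_two.of_nonneg_of_le (fun k => by positivity) fun k => ?_
  have hnat : 2 ^ k * ∑ n ∈ range (m k + 1), b n ≤ b (m k + 1) :=
    calc _ ≤ 2 ^ k * (2 * b (m k)) := Nat.mul_le_mul_left _ (sum_range_succ_le_two_mul hratio _)
      _ = 2 ^ (k + 1) * b (m k) := by ring
      _ ≤ b (m k + 1) := hgap k
  have hpos : (0 : ℝ) < b (m k + 1) := by exact_mod_cast hbpos _
  rw [div_le_iff₀ hpos, one_div_pow, one_div, ← div_eq_inv_mul, le_div_iff₀' (by positivity)]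
  exact_mod_cast hnat

end Multiplicative

/-- If `b` is multiplicative (`bₙ ∣ bₙ₊₁` with ratios `≥ 2`) with unbounded ratios,
then `G₁(b)` is uncountable. -/
theorem stmt4 (b : ℕ → ℕ) (hbpos : ∀ n, 0 < b n)
    (hdvd : ∀ n, b n ∣ b (n + 1)) (hratio : ∀ n, 2 * b n ≤ b (n + 1))
    (hsup : ∀ M : ℕ, ∃ n, M * b n ≤ b (n + 1)) :
    ¬ (G1 b).Countable := by
  have hmono : Monotone b := monotone_nat_of_le_succ fun n => by linarith [hratio n]
  obtain ⟨m, hm, hgap⟩ := extraction_forall_of_frequently fun k =>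
    frequently_mul_le_succ hbpos hmono hsup (2 ^ (k + 1))
  have hq₀ : 2 ≤ b (m 0 + 1) :=
    (Nat.le_mul_of_pos_right 2 (hbpos (m 0))).trans (by simpa using hgap 0)
  have hinj := injective_coe_tsum_indicator_inv (q := fun k => b (m k + 1)) (fun k => hbpos _)
    (three_mul_le_of_pow_mul_le hmono hm hgap) hq₀
  have hmem := coe_tsum_indicator_inv_mem_G1 hm
    (fun k n h => Nat.rel_of_forall_rel_succ_of_le (· ∣ ·) hdvd h)
    (summable_sum_range_div_of_pow_mul_le hbpos hratio hgap)
  have := uncountable_set_of_infinite ℕ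
  intro hcount
  have := hcount.to_subtype
  exact not_injective_uncountable_countable _ (hinj.codRestrict hmem)
end

section
/- Let b be the Erdős–Taylor sequence associated to (a₁, a₂, …), i.e. b₁ = 1 and b_{n+1} = a_n b_n + 1. For any real t not an integer, if ‖b_n t‖ < ‖t‖/(2 a_n) then ‖b_{n+1} t‖ > ‖t‖/2. -/
lemma nint_le_int (x : ℝ) (m : ℤ) : nint x ≤ |x - m| := round_le x m

/-- For the Erdős–Taylor sequence `b₁ = 1`, `bₙ₊₁ = aₙ bₙ + 1` and `t ∉ ℤ`:
if `‖bₙ t‖ < ‖t‖/(2 aₙ)` then `‖bₙ₊₁ t‖ > ‖t‖/2`. -/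
theorem stmt8 (a b : ℕ → ℕ) (ha : ∀ n, 1 ≤ a n)
    (hb1 : b 1 = 1) (hrec : ∀ n, 1 ≤ n → b (n + 1) = a n * b n + 1)
    (t : ℝ) (ht : 0 < nint t) (n : ℕ) (hn : 1 ≤ n)
    (h : nint ((b n : ℝ) * t) < nint t / (2 * a n)) :
    nint t / 2 < nint ((b (n + 1) : ℝ) * t) := by
  have key : ∀ x y : ℝ, nint y - nint x ≤ nint (x + y) := by
    intro x y
    have h1 : nint y ≤ |y - ((round (x + y) - round x : ℤ) : ℝ)| :=
      nint_le_int y _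
    have h2 : |y - ((round (x + y) - round x : ℤ) : ℝ)|
        ≤ nint (x + y) + nint x := by
      have : y - (((round (x + y) : ℤ) - round x : ℤ) : ℝ)
          = ((x + y) - round (x + y)) - (x - round x) := by push_cast; ring
      rw [this]
      exact (abs_sub _ _).trans (by rw [nint, nint])
    linarith
  have hmul : ∀ (k : ℕ) (x : ℝ), nint ((k : ℝ) * x) ≤ (k : ℝ) * nint x := by
    intro k x
    have h1 : nint ((k : ℝ) * x) ≤ |(k : ℝ) * x - ((k * round x : ℤ) : ℝ)| :=
      nint_le_int _ _
    have : |(k : ℝ) * x - ((k * round x : ℤ) : ℝ)| = (k : ℝ) * nint x := by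
      have e : (k : ℝ) * x - ((k * round x : ℤ) : ℝ) = (k : ℝ) * (x - round x) := by
        push_cast; ring
      rw [nint, e, abs_mul, abs_of_nonneg (by positivity : (0:ℝ) ≤ (k:ℝ))]
    linarith
  have hb : ((b (n + 1) : ℕ) : ℝ) * t = (a n : ℝ) * ((b n : ℝ) * t) + t := by
    rw [hrec n hn]; push_cast; ring
  have hk := key ((a n : ℝ) * ((b n : ℝ) * t)) t
  have hm := hmul (a n) ((b n : ℝ) * t)
  have ha' : (1 : ℝ) ≤ (a n : ℝ) := by exact_mod_cast ha n
  have hpos : (0 : ℝ) < a n := by linarith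
  have hlt : (a n : ℝ) * nint ((b n : ℝ) * t) < nint t / 2 := by
    have := mul_lt_mul_of_pos_left h hpos
    calc (a n : ℝ) * nint ((b n : ℝ) * t)
        < (a n : ℝ) * (nint t / (2 * a n)) := this
      _ = nint t / 2 := by field_simp
  rw [hb]
  linarith
end

section
/- Let T be an invertible measure preserving transformation of a probability space and b a strictly increasing sequence of positive integers. The collection R_IP(b) := {A ∈ ℬ : m(A △ T^{b(F)} A) → 0 as min F → ∞ over finite nonempty F} is a T-invariant σ-algebra. -/
open MeasureTheory ENNReal

variable {X : Type*} [MeasurableSpace X]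

/-- the collection `R_IP(b)` of measurable sets `A` with
`m(A △ T^{b(F)} A) → 0` as `min F → ∞` over finite nonempty `F ⊆ ℕ`.
(Here `T^{b(F)} A` is the image of `A` under the `b(F)`-th iterate of `T = e`,
i.e. the preimage under the iterate of `e.symm`.) -/
def RIP (μ : Measure X) (e : X ≃ᵐ X) (b : ℕ → ℕ) : Set (Set X) :=
  {A | MeasurableSet A ∧ ∀ ε : ℝ≥0∞, 0 < ε → ∃ K : ℕ, ∀ F : Finset ℕ, ∀ hF : F.Nonempty,
    K ≤ F.min' hF → μ (symmDiff A ((⇑e.symm)^[∑ j ∈ F, b j] ⁻¹' A)) < ε}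

/-!
For any family of measure-preserving maps `S i` and any filter, the measurable sets `A` with
`μ (A ∆ (S i ⁻¹' A)) → 0` form a σ-algebra. Complements are free, as `Aᶜ ∆ Bᶜ = A ∆ B`, and
finite unions follow from `(A ∪ B) ∆ (C ∪ D) ⊆ (A ∆ C) ∪ (B ∆ D)`. Since `S i` preserves `μ`,
`A ↦ μ (A ∆ (S i ⁻¹' A))` is `2`-Lipschitz for the distance `μ (A ∆ B)`, so the class is closed
under limits for that distance, and a countable union is such a limit of its finite partial unions
when `μ` is finite. Invariance under `T` holds because `T` preserves `μ` and commutes with every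
power of `T⁻¹`.
-/

open Filter Topology Set
open scoped symmDiff

section Rigidity

variable {ι : Type*} {μ : Measure X}

lemma measure_symmDiff_preimage_le {S : X → X} (hS : MeasurePreserving S μ μ) {A B : Set X}
    (hAB : NullMeasurableSet (A ∆ B) μ) :
    μ (A ∆ (S ⁻¹' A)) ≤ μ (B ∆ (S ⁻¹' B)) + 2 * μ (A ∆ B) := by
  calc μ (A ∆ (S ⁻¹' A)) ≤ μ (A ∆ B) + (μ (B ∆ (S ⁻¹' B)) + μ ((S ⁻¹' B) ∆ (S ⁻¹' A))) :=
        (measure_symmDiff_le _ _ _).trans (add_le_add_right (measure_symmDiff_le _ _ _) _)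
    _ = μ (B ∆ (S ⁻¹' B)) + 2 * μ (A ∆ B) := by
        rw [← preimage_symmDiff, symmDiff_comm B A, hS.measure_preimage hAB]
        ring

lemma measure_union_symmDiff_preimage_le (S : X → X) (A B : Set X) :
    μ ((A ∪ B) ∆ (S ⁻¹' (A ∪ B))) ≤ μ (A ∆ (S ⁻¹' A)) + μ (B ∆ (S ⁻¹' B)) := by
  rw [preimage_union]
  exact (measure_mono (union_symmDiff_union_subset ..)).trans (measure_union_le _ _)

def rigidSets (μ : Measure X) (S : ι → X → X) (l : Filter ι) : Set (Set X) :=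
  {A | MeasurableSet A ∧ Tendsto (fun i => μ (A ∆ (S i ⁻¹' A))) l (𝓝 0)}

variable {S : ι → X → X} {l : Filter ι}

lemma empty_mem_rigidSets : ∅ ∈ rigidSets μ S l :=
  ⟨.empty, by simpa using tendsto_const_nhds⟩

lemma compl_mem_rigidSets {A : Set X} (hA : A ∈ rigidSets μ S l) : Aᶜ ∈ rigidSets μ S l :=
  ⟨hA.1.compl, by simpa only [preimage_compl, compl_symmDiff_compl] using hA.2⟩

lemma union_mem_rigidSets {A B : Set X} (hA : A ∈ rigidSets μ S l) (hB : B ∈ rigidSets μ S l) :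
    A ∪ B ∈ rigidSets μ S l := by
  refine ⟨hA.1.union hB.1, ?_⟩
  have hsum := hA.2.add hB.2
  rw [add_zero] at hsum
  exact tendsto_of_tendsto_of_tendsto_of_le_of_le tendsto_const_nhds hsum (fun _ => zero_le)
    fun i => measure_union_symmDiff_preimage_le (S i) A B

lemma accumulate_mem_rigidSets {f : ℕ → Set X} (hf : ∀ n, f n ∈ rigidSets μ S l) (n : ℕ) :
    accumulate f n ∈ rigidSets μ S l := by
  induction n with
  | zero => simpa only [accumulate_zero_nat] using hf 0
  | succ n ih => simpa only [accumulate_succ] using union_mem_rigidSets ih (hf (n + 1))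

lemma mem_rigidSets_of_tendsto (hS : ∀ i, MeasurePreserving (S i) μ μ) {A : Set X}
    {B : ℕ → Set X} (hA : MeasurableSet A) (hB : ∀ n, B n ∈ rigidSets μ S l)
    (hAB : Tendsto (fun n => μ (A ∆ B n)) atTop (𝓝 0)) : A ∈ rigidSets μ S l := by
  refine ⟨hA, ENNReal.tendsto_nhds_zero.2 fun ε hε => ?_⟩
  have hε3 : 0 < ε / 3 := ENNReal.div_pos hε.ne' ENNReal.ofNat_ne_top
  obtain ⟨n, hn⟩ := (ENNReal.tendsto_nhds_zero.1 hAB _ hε3).exists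
  filter_upwards [ENNReal.tendsto_nhds_zero.1 (hB n).2 _ hε3] with i hi
  calc μ (A ∆ (S i ⁻¹' A)) ≤ μ (B n ∆ (S i ⁻¹' B n)) + 2 * μ (A ∆ B n) :=
        measure_symmDiff_preimage_le (hS i) (hA.symmDiff (hB n).1).nullMeasurableSet
    _ ≤ ε / 3 + 2 * (ε / 3) := by gcongr
    _ = ε := by rw [two_mul, ← add_assoc, ENNReal.add_thirds]

lemma iUnion_mem_rigidSets [IsFiniteMeasure μ] (hS : ∀ i, MeasurePreserving (S i) μ μ)
    {f : ℕ → Set X} (hf : ∀ n, f n ∈ rigidSets μ S l) : ⋃ n, f n ∈ rigidSets μ S l := by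
  refine mem_rigidSets_of_tendsto hS (.iUnion fun n => (hf n).1) (accumulate_mem_rigidSets hf) ?_
  have hlim := ENNReal.Tendsto.sub tendsto_const_nhds
    (tendsto_measure_iUnion_accumulate (μ := μ) (f := f)) (Or.inl (measure_ne_top μ (⋃ n, f n)))
  rw [tsub_self] at hlim
  refine hlim.congr fun n => ?_
  rw [symmDiff_comm, symmDiff_of_le (accumulate_subset_iUnion n),
    measure_sdiff (accumulate_subset_iUnion n) (accumulate_mem_rigidSets hf n).1.nullMeasurableSet
      (measure_ne_top μ _)]

lemma preimage_mem_rigidSets_iff (e : X ≃ᵐ X) (he : MeasurePreserving e μ μ)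
    (hcomm : ∀ i, Function.Commute e (S i)) {A : Set X} :
    e ⁻¹' A ∈ rigidSets μ S l ↔ A ∈ rigidSets μ S l := by
  have hmeasure : ∀ i, μ ((e ⁻¹' A) ∆ (S i ⁻¹' (e ⁻¹' A))) = μ (A ∆ (S i ⁻¹' A)) := fun i => by
    rw [← preimage_comp, (hcomm i).comp_eq, preimage_comp, ← preimage_symmDiff,
      he.measure_preimage_equiv]
  simp only [rigidSets, mem_ofPred_eq, e.measurableSet_preimage, hmeasure]

end Rigidity

-- `F = ∅` is not excluded: it contributes `A ∆ A = ∅`, so `RIP_eq_rigidSets` still holds.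
def minAtTop : Filter (Finset ℕ) :=
  ⨅ K : ℕ, 𝓟 {F | ∀ j ∈ F, K ≤ j}

lemma hasBasis_minAtTop : minAtTop.HasBasis (fun _ => True) fun K => {F | ∀ j ∈ F, K ≤ j} :=
  hasBasis_iInf_principal (Antitone.directed_ge fun _ _ hKK' _ hF j hj => hKK'.trans (hF j hj))

lemma RIP_eq_rigidSets (μ : Measure X) (e : X ≃ᵐ X) (b : ℕ → ℕ) :
    RIP μ e b = rigidSets μ (fun F => (⇑e.symm)^[∑ j ∈ F, b j]) minAtTop := by
  ext A
  simp only [RIP, rigidSets, mem_ofPred_eq,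
    hasBasis_minAtTop.tendsto_iff ENNReal.nhds_zero_basis, true_and, mem_Iio]
  refine and_congr_right fun _ => forall₂_congr fun ε hε => exists_congr fun K => ⟨?_, ?_⟩
  · intro h F hF
    rcases F.eq_empty_or_nonempty with rfl | hne
    · simpa using hε
    · exact h F hne ((Finset.le_min'_iff _ _).2 hF)
  · intro h F hne hK
    exact h F fun j hj => hK.trans (F.min'_le j hj)

theorem stmt16_general (μ : Measure X) [IsProbabilityMeasure μ]
    (e : X ≃ᵐ X) (he : MeasurePreserving e μ μ)
    (b : ℕ → ℕ) :
    (∅ : Set X) ∈ RIP μ e b ∧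
    (∀ A, A ∈ RIP μ e b → Aᶜ ∈ RIP μ e b) ∧
    (∀ f : ℕ → Set X, (∀ n, f n ∈ RIP μ e b) → (⋃ n, f n) ∈ RIP μ e b) ∧
    (∀ A, A ∈ RIP μ e b ↔ ⇑e ⁻¹' A ∈ RIP μ e b) := by
  have hS (F : Finset ℕ) : MeasurePreserving ((⇑e.symm)^[∑ j ∈ F, b j]) μ μ :=
    (he.symm e).iterate _
  have hcomm (F : Finset ℕ) : Function.Commute e ((⇑e.symm)^[∑ j ∈ F, b j]) :=
    Function.Commute.iterate_right (fun x => by simp) _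
  rw [RIP_eq_rigidSets]
  exact ⟨empty_mem_rigidSets, fun _ => compl_mem_rigidSets, fun _ => iUnion_mem_rigidSets hS,
    fun _ => (preimage_mem_rigidSets_iff e he hcomm).symm⟩

/-- `R_IP(b)` is a `T`-invariant σ-algebra: it contains `∅`, and is closed under
complements, countable unions, and under `T` (and `T⁻¹`). -/
theorem stmt16 (μ : Measure X) [IsProbabilityMeasure μ]
    (e : X ≃ᵐ X) (he : MeasurePreserving e μ μ)
    (b : ℕ → ℕ) (hb : StrictMono b) (hbpos : ∀ n, 0 < b n) :
    (∅ : Set X) ∈ RIP μ e b ∧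
    (∀ A, A ∈ RIP μ e b → Aᶜ ∈ RIP μ e b) ∧
    (∀ f : ℕ → Set X, (∀ n, f n ∈ RIP μ e b) → (⋃ n, f n) ∈ RIP μ e b) ∧
    (∀ A, A ∈ RIP μ e b ↔ ⇑e ⁻¹' A ∈ RIP μ e b) :=
  stmt16_general μ e he b
end

section
/- Let μ be a Borel probability measure on the circle with ∑_{n=1}^∞ |μ̂(n)|/n^{1−α} < ∞ for some α ∈ (0,1), and let L ⊆ ℕ be a set such that |μ̂(n)| ≥ 1/2 for all but finitely many n ∈ L. Then ∑_{n=1}^∞ |L ∩ [1,n]| / n^{2−α} < ∞. -/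
open MeasureTheory

/-- Pointwise inequality `(1-α) x^(α-2) ≤ (x-1)^(α-1) - x^(α-1)` for `x ≥ 2`. -/
lemma stmt18_key {α : ℝ} (hα : 0 < α) (hα1 : α < 1) {x : ℝ} (hx : 2 ≤ x) :
    (1 - α) * x ^ (α - 2) ≤ (x - 1) ^ (α - 1) - x ^ (α - 1) := by
  have hx0 : (0:ℝ) < x := by linarith
  have hx1 : (0:ℝ) < x - 1 := by linarith
  have hinv : (0:ℝ) < 1 - 1/x := by
    rw [sub_pos, div_lt_one hx0]; linarith
  -- Bernoulli: (1 - 1/x)^(1-α) ≤ 1 - (1-α)/x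
  have h1 : (1 - 1/x) ^ (1 - α) ≤ 1 - (1 - α)/x := by
    have := rpow_one_add_le_one_add_mul_self (s := -(1/x))
      (by nlinarith [one_div_pos.2 hx0] : (-1:ℝ) ≤ -(1/x))
      (p := 1 - α) (by linarith) (by linarith)
    have e1 : (1:ℝ) + -(1/x) = 1 - 1/x := by ring
    have e2 : (1:ℝ) + (1 - α) * -(1/x) = 1 - (1 - α)/x := by ring
    rwa [e1, e2] at this
  set v : ℝ := (1 - 1/x) ^ (1 - α) with hv
  have hv0 : 0 < v := Real.rpow_pos_of_pos hinv _
  have hy1 : (1 - α)/x < 1 := by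
    rw [div_lt_one hx0]; linarith
  have h2 : 1 + (1 - α)/x ≤ v⁻¹ := by
    have hmul : (1 + (1 - α)/x) * v ≤ 1 := by nlinarith [div_nonneg (by linarith : (0:ℝ) ≤ 1 - α) hx0.le]
    have := mul_le_mul_of_nonneg_right hmul (inv_pos.2 hv0).le
    rwa [mul_assoc, mul_inv_cancel₀ hv0.ne', mul_one, one_mul] at this
  have h3 : (1 - 1/x) ^ (α - 1) = v⁻¹ := by
    rw [hv, ← Real.rpow_neg hinv.le]; ring_nf
  have h4 : (x - 1) ^ (α - 1) = x ^ (α - 1) * (1 - 1/x) ^ (α - 1) := by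
    rw [← Real.mul_rpow hx0.le hinv.le]
    congr 1
    field_simp
  have h5 : x ^ (α - 2) = x ^ (α - 1) / x := by
    rw [div_eq_mul_inv, ← Real.rpow_neg_one x, ← Real.rpow_add hx0]
    congr 1; ring
  have hp : 0 < x ^ (α - 1) := Real.rpow_pos_of_pos hx0 _
  have h6 : x ^ (α - 1) * (1 + (1 - α)/x) ≤ (x - 1) ^ (α - 1) := by
    rw [h4, h3]
    exact mul_le_mul_of_nonneg_left h2 hp.le
  have : x ^ (α - 1) * (1 + (1 - α)/x) = x ^ (α - 1) + (1 - α) * (x ^ (α - 1) / x) := by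
    ring
  rw [h5]
  linarith [h6, this ▸ h6]

/-- Tail bound: `∑_{n∈[k-1,M)} (n+1)^(α-2) ≤ (1 + 1/(1-α)) k^(α-1)` for `k ≥ 1`. -/
lemma stmt18_tail {α : ℝ} (hα : 0 < α) (hα1 : α < 1) (k M : ℕ) (hk : 1 ≤ k) :
    ∑ n ∈ Finset.Ico (k - 1) M, ((n:ℝ) + 1) ^ (α - 2)
      ≤ (1 + 1/(1 - α)) * (k:ℝ) ^ (α - 1) := by
  have h1α : (0:ℝ) < 1 - α := by linarith
  have hk1 : (1:ℝ) ≤ (k:ℝ) := by exact_mod_cast hk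
  have hkpos : (0:ℝ) < (k:ℝ)^(α-1) := Real.rpow_pos_of_pos (by linarith) _
  have hB : (0:ℝ) < 1 + 1/(1-α) := by positivity
  rcases le_or_gt M (k-1) with hM | hM
  · rw [Finset.Ico_eq_empty (by omega), Finset.sum_empty]
    positivity
  · rw [Finset.sum_eq_sum_Ico_succ_bot hM]
    have hsucc : k - 1 + 1 = k := by omega
    have hcast : ((k - 1 : ℕ) : ℝ) + 1 = (k:ℝ) := by
      have : ((k - 1 : ℕ) : ℝ) = (k:ℝ) - 1 := by
        push_cast [Nat.cast_sub hk]; ring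
      rw [this]; ring
    rw [hsucc, hcast]
    have hfirst : (k:ℝ) ^ (α - 2) ≤ (k:ℝ) ^ (α - 1) :=
      Real.rpow_le_rpow_of_exponent_le hk1 (by linarith)
    -- the rest telescopes
    set g : ℕ → ℝ := fun j => (j:ℝ) ^ (α - 1) with hg
    have hpt : ∀ n ∈ Finset.Ico k M, ((n:ℝ) + 1) ^ (α - 2) ≤ (g n - g (n+1)) / (1 - α) := by
      intro n hn
      rw [Finset.mem_Ico] at hn
      have hn2 : (2:ℝ) ≤ (n:ℝ) + 1 := by
        have : (1:ℝ) ≤ (n:ℝ) := by exact_mod_cast le_trans hk hn.1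
        linarith
      have := stmt18_key hα hα1 hn2
      rw [le_div_iff₀ h1α]
      have e : ((n:ℝ) + 1) - 1 = (n:ℝ) := by ring
      have e2 : ((n+1:ℕ):ℝ) = (n:ℝ) + 1 := by push_cast; ring
      simp only [hg, e2]
      rw [e] at this
      linarith
    have htel : ∑ n ∈ Finset.Ico k M, (g n - g (n+1)) = g k - g M := by
      rw [Finset.sum_Ico_eq_sum_range]
      have : ∀ i, g (k + i) - g (k + i + 1) = (fun i => g (k + i)) i - (fun i => g (k + i)) (i+1) := by
        intro i; simp [Nat.add_assoc]
      simp only [this]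
      rw [Finset.sum_range_sub' (fun i => g (k + i))]
      congr 2
      omega
    have hgM : 0 ≤ g M := Real.rpow_nonneg (Nat.cast_nonneg _) _
    have hrest : ∑ n ∈ Finset.Ico k M, ((n:ℝ) + 1) ^ (α - 2) ≤ (k:ℝ)^(α-1) / (1 - α) := by
      calc ∑ n ∈ Finset.Ico k M, ((n:ℝ) + 1) ^ (α - 2)
          ≤ ∑ n ∈ Finset.Ico k M, (g n - g (n+1)) / (1 - α) := Finset.sum_le_sum hpt
        _ = (g k - g M) / (1 - α) := by rw [← Finset.sum_div, htel]
        _ ≤ g k / (1 - α) := by gcongr <;> linarith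
        _ = (k:ℝ)^(α-1) / (1 - α) := rfl
    have hEq : (1 + 1/(1-α)) * (k:ℝ)^(α-1) = (k:ℝ)^(α-1) + (k:ℝ)^(α-1)/(1-α) := by
      field_simp
    linarith

/-- Let `μ` be a Borel probability measure on the circle with Fourier coefficients
`μ̂(n) = ∫ e^{-2πint} dμ(t)` satisfying `∑_{n≥1} |μ̂(n)|/n^{1-α} < ∞` for some
`α ∈ (0,1)`, and let `L ⊆ ℕ` satisfy `|μ̂(k)| ≥ 1/2` for all but finitely many
`k ∈ L`. Then `∑_{n≥1} |L ∩ [1,n]|/n^{2-α} < ∞`. -/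
theorem stmt18 (μ : Measure (AddCircle (1:ℝ))) [IsProbabilityMeasure μ]
    (c : ℕ → ℂ) (hc : ∀ n, c n = ∫ t, ((AddCircle.toCircle ((-(n : ℤ)) • t)) : ℂ) ∂μ)
    (α : ℝ) (hα : 0 < α) (hα1 : α < 1)
    (hsum : Summable (fun n : ℕ => ‖c (n + 1)‖ / ((n + 1 : ℝ) ^ (1 - α))))
    (L : Set ℕ) (N : ℕ) (hL : ∀ k ∈ L, N < k → (1:ℝ)/2 ≤ ‖c k‖) :
    Summable (fun n : ℕ =>
      ((L ∩ Set.Icc 1 (n + 1)).ncard : ℝ) / ((n + 1 : ℝ) ^ (2 - α))) := by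
  classical
  have h1α : (0:ℝ) < 1 - α := by linarith
  set f : ℕ → ℝ := fun k => ‖c k‖ / ((k:ℝ) ^ (1 - α)) with hf
  have hfnn : ∀ k, 0 ≤ f k := fun k => div_nonneg (norm_nonneg _) (Real.rpow_nonneg (Nat.cast_nonneg _) _)
  have hfs : Summable f := by
    have he : ∀ n : ℕ, f (n + 1) = ‖c (n + 1)‖ / ((n + 1 : ℝ) ^ (1 - α)) := by
      intro n; simp only [hf]; norm_cast
    rw [← summable_nat_add_iff 1]
    simpa only [he] using hsum
  set T : ℝ := ∑' k, f k with hT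
  have hT0 : 0 ≤ T := tsum_nonneg hfnn
  set B : ℝ := 1 + 1/(1-α) with hB
  have hB0 : 0 < B := by positivity
  apply summable_of_sum_range_le (c := B * ((N:ℝ) + 2 * T))
  · intro n
    positivity
  · intro M
    set F : ℕ → Finset ℕ := fun n => (Finset.Icc 1 (n+1)).filter (· ∈ L) with hF
    have hcard : ∀ n : ℕ, (L ∩ Set.Icc 1 (n+1)).ncard = (F n).card := by
      intro n
      rw [← Set.ncard_coe_finset]
      congr 1
      ext k
      simp only [Set.mem_inter_iff, Set.mem_Icc, hF, Finset.coe_filter, Finset.mem_Icc,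
        Set.mem_setOf_eq]
      tauto
    have hterm : ∀ n : ℕ, ((L ∩ Set.Icc 1 (n+1)).ncard : ℝ) / ((n + 1 : ℝ) ^ (2 - α))
        = ∑ _k ∈ F n, ((n:ℝ) + 1) ^ (α - 2) := by
      intro n
      rw [hcard n, Finset.sum_const, nsmul_eq_mul]
      have hpos : (0:ℝ) < (n:ℝ) + 1 := by positivity
      rw [div_eq_mul_inv, ← Real.rpow_neg hpos.le]
      congr 2
      ring
    calc ∑ n ∈ Finset.range M, ((L ∩ Set.Icc 1 (n+1)).ncard : ℝ) / ((n + 1 : ℝ) ^ (2 - α))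
        = ∑ n ∈ Finset.range M, ∑ _k ∈ F n, ((n:ℝ) + 1) ^ (α - 2) := by
          exact Finset.sum_congr rfl fun n _ => hterm n
      _ = ∑ k ∈ (Finset.Icc 1 M).filter (· ∈ L), ∑ n ∈ Finset.Ico (k-1) M, ((n:ℝ) + 1) ^ (α - 2) := by
          apply Finset.sum_comm'
          intro n k
          simp only [Finset.mem_range, hF, Finset.mem_filter, Finset.mem_Icc, Finset.mem_Ico]
          constructor <;> rintro ⟨h1, h2, h3⟩ <;> exact ⟨by omega, by omega, h3⟩
      _ ≤ ∑ k ∈ (Finset.Icc 1 M).filter (· ∈ L), B * (k:ℝ) ^ (α - 1) := by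
          apply Finset.sum_le_sum
          intro k hk
          rw [Finset.mem_filter, Finset.mem_Icc] at hk
          exact stmt18_tail hα hα1 k M hk.1.1
      _ = B * ∑ k ∈ (Finset.Icc 1 M).filter (· ∈ L), (k:ℝ) ^ (α - 1) := by
          rw [Finset.mul_sum]
      _ ≤ B * ((N:ℝ) + 2 * T) := by
          apply mul_le_mul_of_nonneg_left _ hB0.le
          set S := (Finset.Icc 1 M).filter (· ∈ L) with hS
          rw [← Finset.sum_filter_add_sum_filter_not S (· ≤ N)]
          have hS1 : ∑ k ∈ S.filter (· ≤ N), (k:ℝ) ^ (α - 1) ≤ (N:ℝ) := by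
            calc ∑ k ∈ S.filter (· ≤ N), (k:ℝ) ^ (α - 1)
                ≤ ∑ _k ∈ S.filter (· ≤ N), (1:ℝ) := by
                  apply Finset.sum_le_sum
                  intro k hk
                  simp only [hS, Finset.mem_filter, Finset.mem_Icc] at hk
                  apply Real.rpow_le_one_of_one_le_of_nonpos
                  · exact_mod_cast hk.1.1.1
                  · linarith
              _ = ((S.filter (· ≤ N)).card : ℝ) := by rw [Finset.sum_const]; simp
              _ ≤ (N:ℝ) := by
                  have hsub : S.filter (· ≤ N) ⊆ Finset.Icc 1 N := by
                    intro k hk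
                    simp only [hS, Finset.mem_filter, Finset.mem_Icc] at hk ⊢
                    omega
                  have := Finset.card_le_card hsub
                  rw [Nat.card_Icc] at this
                  exact_mod_cast le_trans this (by omega)
          have hS2 : ∑ k ∈ S.filter (fun k => ¬ k ≤ N), (k:ℝ) ^ (α - 1) ≤ 2 * T := by
            have hpt : ∀ k ∈ S.filter (fun k => ¬ k ≤ N), (k:ℝ) ^ (α - 1) ≤ 2 * f k := by
              intro k hk
              simp only [hS, Finset.mem_filter, Finset.mem_Icc, not_le] at hk
              have hcL : (1:ℝ)/2 ≤ ‖c k‖ := hL k hk.1.2 hk.2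
              have hkpos : (0:ℝ) < (k:ℝ) := by exact_mod_cast hk.1.1.1
              have hppos : (0:ℝ) < (k:ℝ) ^ (1 - α) := Real.rpow_pos_of_pos hkpos _
              have he : (k:ℝ) ^ (α - 1) = ((k:ℝ) ^ (1 - α))⁻¹ := by
                rw [← Real.rpow_neg hkpos.le]
                congr 1; ring
              rw [he]
              have h2c : (1:ℝ) ≤ 2 * ‖c k‖ := by linarith
              calc ((k:ℝ) ^ (1 - α))⁻¹ = 1 / ((k:ℝ) ^ (1 - α)) := (one_div _).symm
                _ ≤ (2 * ‖c k‖) / ((k:ℝ) ^ (1 - α)) := by gcongr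
                _ = 2 * f k := by simp only [hf]; ring
            calc ∑ k ∈ S.filter (fun k => ¬ k ≤ N), (k:ℝ) ^ (α - 1)
                ≤ ∑ k ∈ S.filter (fun k => ¬ k ≤ N), 2 * f k := Finset.sum_le_sum hpt
              _ = 2 * ∑ k ∈ S.filter (fun k => ¬ k ≤ N), f k := by rw [Finset.mul_sum]
              _ ≤ 2 * T := by
                  apply mul_le_mul_of_nonneg_left _ (by norm_num : (0:ℝ) ≤ 2)
                  exact Summable.sum_le_tsum _ (fun k _ => hfnn k) hfs
          linarith
end
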